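/- Let α ∈ [0,1) and c > 0, so c_α = c^{1−α}/(α−1) < 0, and let L be the virtual SIGTRON-induced loss function for this case: L(x) = c_α·F(1 + x/c_α; 1−α) − c_α − x for x ≤ −c_α and L(x) = 0 for x > −c_α. Then L(x) ≥ 0 for all x ∈ ℝ, and L(x) = 0 if and only if x ≥ −c_α; in particular L(x) > 0 for every x < −c_α. -/

import Mathlib

/-- `c_α = c^{1−α}/(α−1)` (real power). -/
noncomputable def cA (α c : ℝ) : ℝ := c ^ (1 - α) / (α - 1)

/-- `F(z;b) = ∫₀^z 1/(1 + t^{1/b}) dt`. -/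
noncomputable def Fint (z b : ℝ) : ℝ := ∫ t in (0 : ℝ)..z, 1 / (1 + t ^ ((1 : ℝ) / b))

/-- Virtual SIGTRON-induced loss for `α ∈ [0,1)`:
`L(x) = c_α·F(1+x/c_α; 1−α) − c_α − x` for `x ≤ −c_α`, and `L(x) = 0` otherwise. -/
noncomputable def lossLT (α c : ℝ) (x : ℝ) : ℝ :=
  if x ≤ -(cA α c) then cA α c * Fint (1 + x / cA α c) (1 - α) - cA α c - x else 0

/-!
Substituting `z = 1 + x / c_α` gives `L(x) = c_α · (F(z; 1 - α) - z)` on `x ≤ -c_α`, where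
`z ≥ 0` with `z = 0` exactly at `x = -c_α`. Since the integrand of `F` is `< 1` for `t > 0`,
`F(z; b) < z` for `z > 0`, and `c_α < 0` turns this into `L(x) > 0`.
-/

open Set

lemma continuousOn_one_div_one_add_rpow {p : ℝ} (hp : 0 ≤ p) :
    ContinuousOn (fun t : ℝ => 1 / (1 + t ^ p)) (Ici 0) := by
  refine continuousOn_const.div
    (continuousOn_const.add (Real.continuous_rpow_const hp).continuousOn) fun t ht => ?_
  have : 0 ≤ t ^ p := Real.rpow_nonneg ht p
  positivity

lemma integral_one_div_one_add_rpow_lt {p z : ℝ} (hp : 0 ≤ p) (hz : 0 < z) :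
    ∫ t in (0 : ℝ)..z, 1 / (1 + t ^ p) < z := by
  have hlt_one : ∀ t : ℝ, 0 < t → 1 / (1 + t ^ p) < 1 := fun t ht => by
    rw [div_lt_one (by positivity)]
    linarith [Real.rpow_pos_of_pos ht p]
  calc ∫ t in (0 : ℝ)..z, 1 / (1 + t ^ p)
      < ∫ _ in (0 : ℝ)..z, (1 : ℝ) :=
        intervalIntegral.integral_lt_integral_of_continuousOn_of_le_of_exists_lt hz
          ((continuousOn_one_div_one_add_rpow hp).mono Icc_subset_Ici_self) continuousOn_const
          (fun t ht => (hlt_one t ht.1).le) ⟨z, right_mem_Icc.2 hz.le, hlt_one z hz⟩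
    _ = z := by simp

lemma Fint_lt_self {z b : ℝ} (hz : 0 < z) (hb : 0 ≤ b) : Fint z b < z :=
  integral_one_div_one_add_rpow_lt (by positivity) hz

lemma cA_neg {α c : ℝ} (hα : α < 1) (hc : 0 < c) : cA α c < 0 :=
  div_neg_of_pos_of_neg (Real.rpow_pos_of_pos hc _) (by linarith)

lemma lossLT_of_le {α c x : ℝ} (hcA : cA α c ≠ 0) (hx : x ≤ -cA α c) :
    lossLT α c x = cA α c * (Fint (1 + x / cA α c) (1 - α) - (1 + x / cA α c)) := by
  rw [lossLT, if_pos hx]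
  field_simp
  ring

lemma lossLT_pos_of_lt {α c x : ℝ} (hα : α < 1) (hc : 0 < c) (hx : x < -cA α c) :
    0 < lossLT α c x := by
  have hcA := cA_neg hα hc
  have hz : 0 < 1 + x / cA α c := by
    have : -1 < x / cA α c := by rw [lt_div_iff_of_neg hcA]; linarith
    linarith
  rw [lossLT_of_le hcA.ne hx.le]
  exact mul_pos_of_neg_of_neg hcA (sub_neg.2 (Fint_lt_self hz (by linarith)))

lemma lossLT_eq_zero_of_le {α c x : ℝ} (hx : -cA α c ≤ x) : lossLT α c x = 0 := by
  rcases hx.eq_or_lt with rfl | hlt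
  · by_cases hcA : cA α c = 0
    · simp [lossLT, hcA]
    · rw [lossLT_of_le hcA le_rfl, neg_div_self hcA, add_neg_cancel, Fint,
        intervalIntegral.integral_same]
      ring
  · exact if_neg (not_le.2 hlt)

/-- For `α ∈ [0,1)` and `c > 0`, the virtual SIGTRON-induced loss
`L = lossLT α c` is nonnegative, vanishes exactly on `{x : x ≥ −c_α}`, and is
strictly positive for every `x < −c_α`. -/
theorem sigtron_stmt14 (α c : ℝ) (hα : α ∈ Set.Ico (0 : ℝ) 1) (hc : 0 < c) :
    (∀ x, 0 ≤ lossLT α c x) ∧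
    (∀ x, lossLT α c x = 0 ↔ -(cA α c) ≤ x) ∧
    (∀ x, x < -(cA α c) → 0 < lossLT α c x) := by
  have hpos : ∀ x, x < -cA α c → 0 < lossLT α c x := fun _ => lossLT_pos_of_lt hα.2 hc
  refine ⟨fun x => ?_, fun x => ⟨fun h => ?_, lossLT_eq_zero_of_le⟩, hpos⟩
  · rcases lt_or_ge x (-cA α c) with hx | hx
    · exact (hpos x hx).le
    · exact (lossLT_eq_zero_of_le hx).ge
  · by_contra hx
    exact (hpos x (not_le.1 hx)).ne' h
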